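/- arXiv:2011.05371 — 2 statements merged into one kernel-verified Lean document; each statement's English description precedes it below -/
import Mathlib

section
/- Let G be a graph with no isolated vertex and H a nontrivial graph with γ_2(H) = γ(H) = 2. Then γ_I(G∘H) = γ_{(2,2,0)}(G). -/
open scoped Classical
open Finset SimpleGraph

/-- A `w`-dominating function: `f : V → {0,…,l}` with `f(N(v)) ≥ w_{f(v)}` for all `v`. -/
def WDom {V : Type*} [Fintype V] (G : SimpleGraph V) {l : ℕ} (w : Fin (l+1) → ℕ)
    (f : V → Fin (l+1)) : Prop :=
  ∀ v, w (f v) ≤ ∑ u, if G.Adj v u then (f u : ℕ) else 0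

/-- The `w`-domination number. -/
noncomputable def gammaW {V : Type*} [Fintype V] (G : SimpleGraph V) {l : ℕ}
    (w : Fin (l+1) → ℕ) : ℕ :=
  sInf {n | ∃ f : V → Fin (l+1), WDom G w f ∧ ∑ v, (f v : ℕ) = n}

/-- The Italian domination number `γ_I = γ_{(2,0,0)}`. -/
noncomputable def gammaI {V : Type*} [Fintype V] (G : SimpleGraph V) : ℕ :=
  gammaW G ![2,0,0]

/-- The domination number. -/
noncomputable def gamma {V : Type*} [Fintype V] (G : SimpleGraph V) : ℕ :=
  sInf {n | ∃ S : Finset V, (∀ v, v ∈ S ∨ ∃ u ∈ S, G.Adj u v) ∧ S.card = n}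

/-- The total domination number. -/
noncomputable def gammaT {V : Type*} [Fintype V] (G : SimpleGraph V) : ℕ :=
  sInf {n | ∃ S : Finset V, (∀ v, ∃ u ∈ S, G.Adj u v) ∧ S.card = n}

/-- The 2-domination number. -/
noncomputable def gamma2 {V : Type*} [Fintype V] (G : SimpleGraph V) : ℕ :=
  sInf {n | ∃ S : Finset V, (∀ v ∉ S, 2 ≤ (S.filter (fun u => G.Adj u v)).card) ∧ S.card = n}

/-- The double domination number. -/
noncomputable def gammaX2 {V : Type*} [Fintype V] (G : SimpleGraph V) : ℕ :=
  sInf {n | ∃ S : Finset V, (∀ v, 2 ≤ (S.filter (fun u => u = v ∨ G.Adj u v)).card) ∧ S.card = n}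

/-- The double total domination number. -/
noncomputable def gammaX2T {V : Type*} [Fintype V] (G : SimpleGraph V) : ℕ :=
  sInf {n | ∃ S : Finset V, (∀ v, 2 ≤ (S.filter (fun u => G.Adj u v)).card) ∧ S.card = n}

/-- The lexicographic product `G ∘ H`. -/
def lexProd {V W : Type*} (G : SimpleGraph V) (H : SimpleGraph W) : SimpleGraph (V × W) where
  Adj x y := G.Adj x.1 y.1 ∨ (x.1 = y.1 ∧ H.Adj x.2 y.2)
  symm := by
    constructor
    rintro x y (h | ⟨h1, h2⟩)
    · exact Or.inl h.symm
    · exact Or.inr ⟨h1.symm, h2.symm⟩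
  loopless := by
    constructor
    rintro x (h | ⟨_, h⟩)
    · exact G.irrefl h
    · exact H.irrefl h

/-!
A (2,2,0)-dominating function `g` on `G` lifts to an Italian function on `G ∘ H` of the same
weight: with `{a, b}` a 2-dominating set of `H`, put weight 1 on `(v, a)` when `g v ≥ 1` and on
`(v, b)` when `g v = 2`. A fiber of weight 2 then Italian-dominates its own zeros, and any other
zero sees at least 2 in the neighbouring fibers.

Conversely, an Italian function `f` on `G ∘ H` projects to `v ↦ min 2 (f({v} × H))`. If the fiber
over `v` has weight at most 1, then, since no vertex dominates `H` (`γ(H) = 2`), some vertex of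
that fiber has no weight on its closed neighbourhood inside the fiber; the Italian condition there
is met by the neighbouring fibers alone, and capping at 2 preserves it.
-/

theorem Finset.min_sum_le_sum_min {ι : Type*} (s : Finset ι) (t : ι → ℕ) (k : ℕ) :
    min k (∑ i ∈ s, t i) ≤ ∑ i ∈ s, min k (t i) := by
  classical
  induction s using Finset.induction with
  | empty => simp
  | insert _ _ h ih => rw [sum_insert h, sum_insert h]; omega

namespace SimpleGraph

variable {V W : Type*} [Fintype V] [Fintype W]

noncomputable def neighborSum (G : SimpleGraph V) (F : V → ℕ) (v : V) : ℕ :=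
  ∑ u, if G.Adj v u then F u else 0

theorem neighborSum_lexProd (G : SimpleGraph V) (H : SimpleGraph W) (F : V × W → ℕ)
    (v : V) (w : W) :
    (lexProd G H).neighborSum F (v, w) =
      G.neighborSum (fun u => ∑ w', F (u, w')) v + H.neighborSum (fun w' => F (v, w')) w := by
  have split : ∀ u w', (if (lexProd G H).Adj (v, w) (u, w') then F (u, w') else 0) =
      (if G.Adj v u then F (u, w') else 0) +
        if v = u then (if H.Adj w w' then F (u, w') else 0) else 0 := by
    intro u w'
    by_cases huv : G.Adj v u
    · simp [lexProd, huv, huv.ne]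
    · by_cases h : v = u <;> simp [lexProd, huv, h]
  simp only [neighborSum, Fintype.sum_prod_type, split, sum_add_distrib]
  congr 1
  · exact sum_congr rfl fun u _ => by split_ifs <;> simp
  · simp

theorem min_le_neighborSum_min (G : SimpleGraph V) (F : V → ℕ) (k : ℕ) (v : V) :
    min k (G.neighborSum F v) ≤ G.neighborSum (fun u => min k (F u)) v := by
  refine (min_sum_le_sum_min _ _ k).trans_eq (sum_congr rfl fun u _ => ?_)
  split_ifs <;> simp

theorem add_le_neighborSum {G : SimpleGraph V} {F : V → ℕ} {v a b : V} (hab : a ≠ b)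
    (ha : G.Adj v a) (hb : G.Adj v b) : F a + F b ≤ G.neighborSum F v := by
  have := sum_le_sum_of_subset (f := fun u => if G.Adj v u then F u else 0) (subset_univ {a, b})
  rwa [sum_pair hab, if_pos ha, if_pos hb] at this

end SimpleGraph

section Domination

variable {V : Type*} [Fintype V] {l : ℕ} {w : Fin (l + 1) → ℕ}

theorem wDom_iff_neighborSum {G : SimpleGraph V} {f : V → Fin (l + 1)} :
    WDom G w f ↔ ∀ v, w (f v) ≤ G.neighborSum (fun u => f u) v :=
  Iff.rfl

theorem wDom_const_of_eq_zero (G : SimpleGraph V) {i : Fin (l + 1)} (h : w i = 0) :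
    WDom G w fun _ => i :=
  fun v => by simp [h]

theorem gammaW_le_sum {G : SimpleGraph V} {f : V → Fin (l + 1)} (hf : WDom G w f) :
    gammaW G w ≤ ∑ v, (f v : ℕ) :=
  Nat.sInf_le (s := {n | ∃ f, WDom G w f ∧ ∑ v, (f v : ℕ) = n}) ⟨f, hf, rfl⟩

theorem gammaW_le_gammaW_of_forall_exists {V' : Type*} [Fintype V'] {G : SimpleGraph V}
    {G' : SimpleGraph V'} {l' : ℕ} {w' : Fin (l' + 1) → ℕ} (hex : ∃ f, WDom G w f)
    (h : ∀ f, WDom G w f →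
      ∃ f' : V' → Fin (l' + 1), WDom G' w' f' ∧ ∑ v, (f' v : ℕ) ≤ ∑ v, (f v : ℕ)) :
    gammaW G' w' ≤ gammaW G w := by
  obtain ⟨f₀, hf₀⟩ := hex
  obtain ⟨f, hf, hsum⟩ :=
    Nat.sInf_mem (s := {n | ∃ f, WDom G w f ∧ ∑ v, (f v : ℕ) = n}) ⟨_, f₀, hf₀, rfl⟩
  obtain ⟨f', hf', hle⟩ := h f hf
  exact (gammaW_le_sum hf').trans (hle.trans_eq hsum)

theorem wDom_italian_iff {G : SimpleGraph V} {f : V → Fin 3} :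
    WDom G ![2, 0, 0] f ↔ ∀ v, (f v : ℕ) = 0 → 2 ≤ G.neighborSum (fun u => f u) v := by
  refine wDom_iff_neighborSum.trans (forall_congr' fun v => ?_)
  generalize f v = i
  fin_cases i <;> simp

theorem wDom_two_two_zero_iff {G : SimpleGraph V} {f : V → Fin 3} :
    WDom G ![2, 2, 0] f ↔ ∀ v, (f v : ℕ) ≤ 1 → 2 ≤ G.neighborSum (fun u => f u) v := by
  refine wDom_iff_neighborSum.trans (forall_congr' fun v => ?_)
  generalize f v = i
  fin_cases i <;> simp

end Domination

section FactorGraph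

variable {W : Type*} [Fintype W] {H : SimpleGraph W}

theorem exists_pair_of_gamma2_eq_two (h : gamma2 H = 2) :
    ∃ a b, a ≠ b ∧ ∀ w, w ≠ a → w ≠ b → H.Adj a w ∧ H.Adj b w := by
  obtain ⟨S, hS, hcard⟩ := Nat.sInf_mem (s := {n | ∃ S : Finset W,
      (∀ v ∉ S, 2 ≤ (S.filter (fun u => H.Adj u v)).card) ∧ S.card = n})
    ⟨_, univ, fun v hv => absurd (mem_univ v) hv, rfl⟩
  rw [show sInf _ = 2 from h, card_eq_two] at hcard
  obtain ⟨a, b, hab, rfl⟩ := hcard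
  refine ⟨a, b, hab, fun w ha hb => ?_⟩
  have hfull : ({a, b} : Finset W).filter (fun u => H.Adj u w) = {a, b} :=
    eq_of_subset_of_card_le (filter_subset _ _)
      ((card_pair hab).trans_le (hS w (by simp [ha, hb])))
  have hmem : ∀ u ∈ ({a, b} : Finset W), H.Adj u w := fun u hu => by
    rw [← hfull] at hu
    exact (mem_filter.1 hu).2
  exact ⟨hmem a (by simp), hmem b (by simp)⟩

theorem exists_ne_not_adj_of_one_lt_gamma (h : 1 < gamma H) (w₀ : W) :
    ∃ w ≠ w₀, ¬ H.Adj w₀ w := by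
  by_contra! hdom
  have : gamma H ≤ 1 :=
    Nat.sInf_le (s := {n | ∃ S : Finset W, (∀ v, v ∈ S ∨ ∃ u ∈ S, H.Adj u v) ∧ S.card = n})
      ⟨{w₀}, fun v => (eq_or_ne v w₀).imp (by simp [·]) fun hv => ⟨w₀, by simp, hdom v hv⟩,
        card_singleton _⟩
  omega

theorem exists_forall_ne_eq_zero_of_sum_le_one [Nonempty W] {F : W → ℕ}
    (hF : ∑ w, F w ≤ 1) : ∃ w₀, ∀ w ≠ w₀, F w = 0 := by
  by_cases h : ∃ w₀, F w₀ ≠ 0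
  · obtain ⟨w₀, hw₀⟩ := h
    refine ⟨w₀, fun w hw => ?_⟩
    have := sum_le_sum_of_subset (f := F) (subset_univ {w₀, w})
    rw [sum_pair hw.symm] at this
    omega
  · push Not at h
    exact ⟨Classical.arbitrary W, fun w _ => h w⟩

theorem exists_eq_zero_neighborSum_eq_zero [Nonempty W] (hH : ∀ w₀, ∃ w ≠ w₀, ¬ H.Adj w₀ w)
    {F : W → ℕ} (hF : ∑ w, F w ≤ 1) : ∃ w, F w = 0 ∧ H.neighborSum F w = 0 := by
  obtain ⟨w₀, hw₀⟩ := exists_forall_ne_eq_zero_of_sum_le_one hF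
  obtain ⟨w, hne, hnadj⟩ := hH w₀
  refine ⟨w, hw₀ w hne, sum_eq_zero fun u _ => ?_⟩
  split_ifs with hadj
  · exact hw₀ u fun hu => hnadj (hu ▸ hadj.symm)
  · rfl

end FactorGraph

section LexProduct

variable {V W : Type*} [Fintype W] {G : SimpleGraph V} {H : SimpleGraph W}

noncomputable def lexLift (a b : W) (g : V → Fin 3) (x : V × W) : Fin 3 :=
  ⟨if x.2 = a then min 1 (g x.1) else if x.2 = b then g x.1 - 1 else 0, by
    have := (g x.1).isLt
    split_ifs <;> omega⟩

theorem sum_lexLift_fiber {a b : W} (hab : a ≠ b) (g : V → Fin 3) (v : V) :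
    ∑ w, (lexLift a b g (v, w) : ℕ) = g v := by
  rw [Fintype.sum_eq_add a b hab fun w hw => by simp [lexLift, hw.1, hw.2]]
  simp only [lexLift, if_pos, if_neg hab.symm]
  omega

theorem sum_lexLift [Fintype V] {a b : W} (hab : a ≠ b) (g : V → Fin 3) :
    ∑ x, (lexLift a b g x : ℕ) = ∑ v, (g v : ℕ) := by
  rw [Fintype.sum_prod_type]
  exact sum_congr rfl fun v _ => sum_lexLift_fiber hab g v

theorem wDom_lexLift [Fintype V] {a b : W} (hab : a ≠ b)
    (hdom : ∀ w, w ≠ a → w ≠ b → H.Adj a w ∧ H.Adj b w) {g : V → Fin 3}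
    (hg : WDom G ![2, 2, 0] g) : WDom (lexProd G H) ![2, 0, 0] (lexLift a b g) := by
  rw [wDom_italian_iff]
  rintro ⟨v, w⟩ hzero
  simp only [neighborSum_lexProd, sum_lexLift_fiber hab]
  by_cases hgv : (g v : ℕ) ≤ 1
  · exact (wDom_two_two_zero_iff.1 hg v hgv).trans (Nat.le_add_right _ _)
  have hwa : w ≠ a := by rintro rfl; simp [lexLift] at hzero; omega
  have hwb : w ≠ b := by rintro rfl; simp [lexLift, hab.symm] at hzero; omega
  obtain ⟨hadja, hadjb⟩ := hdom w hwa hwb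
  calc 2 = (lexLift a b g (v, a) : ℕ) + lexLift a b g (v, b) := by
          simp [lexLift, hab.symm]; omega
    _ ≤ _ := add_le_neighborSum (F := fun w => (lexLift a b g (v, w) : ℕ)) hab hadja.symm
      hadjb.symm
    _ ≤ _ := Nat.le_add_left _ _

def lexProject (f : V × W → Fin 3) (v : V) : Fin 3 :=
  ⟨min 2 (∑ w, (f (v, w) : ℕ)), by omega⟩

theorem sum_lexProject_le [Fintype V] (f : V × W → Fin 3) :
    ∑ v, (lexProject f v : ℕ) ≤ ∑ x, (f x : ℕ) := by
  rw [Fintype.sum_prod_type]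
  exact sum_le_sum fun v _ => min_le_right _ _

theorem wDom_lexProject [Fintype V] [Nonempty W] (hH : ∀ w₀, ∃ w ≠ w₀, ¬ H.Adj w₀ w)
    {f : V × W → Fin 3} (hf : WDom (lexProd G H) ![2, 0, 0] f) :
    WDom G ![2, 2, 0] (lexProject f) := by
  rw [wDom_two_two_zero_iff]
  intro v hv
  obtain ⟨w, hzero, hquiet⟩ :=
    exists_eq_zero_neighborSum_eq_zero hH (F := fun w => f (v, w))
      (by simp [lexProject] at hv; omega)
  have hfiber := wDom_italian_iff.1 hf (v, w) hzero
  rw [neighborSum_lexProd, hquiet, add_zero] at hfiber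
  calc 2 ≤ min 2 (G.neighborSum (fun u => ∑ w, (f (u, w) : ℕ)) v) := le_min le_rfl hfiber
    _ ≤ _ := min_le_neighborSum_min _ _ _ _

end LexProduct

theorem italian_lex_of_gamma2_eq_two_general {V W : Type*} [Fintype V] [Fintype W]
    (G : SimpleGraph V) (H : SimpleGraph W)
    (hH2 : gamma2 H = 2) (hH : gamma H = 2) :
    gammaI (lexProd G H) = gammaW G ![2,2,0] := by
  obtain ⟨a, b, hab, hdom⟩ := exists_pair_of_gamma2_eq_two hH2
  have : Nonempty W := ⟨a⟩
  have hnotdom := exists_ne_not_adj_of_one_lt_gamma (hH ▸ one_lt_two)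
  apply le_antisymm
  · exact gammaW_le_gammaW_of_forall_exists ⟨_, wDom_const_of_eq_zero G (i := 2) rfl⟩
      fun g hg => ⟨lexLift a b g, wDom_lexLift hab hdom hg, (sum_lexLift hab g).le⟩
  · exact gammaW_le_gammaW_of_forall_exists ⟨_, wDom_const_of_eq_zero _ (i := 2) rfl⟩
      fun f hf => ⟨lexProject f, wDom_lexProject hnotdom hf, sum_lexProject_le f⟩

theorem italian_lex_of_gamma2_eq_two {V W : Type*} [Fintype V] [Fintype W] [Nontrivial W]
    (G : SimpleGraph V) (H : SimpleGraph W)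
    (hG : ∀ v, ∃ u, G.Adj v u) (hH2 : gamma2 H = 2) (hH : gamma H = 2) :
    gammaI (lexProd G H) = gammaW G ![2,2,0] :=
  italian_lex_of_gamma2_eq_two_general G H hH2 hH
end

section
/- For any graph G with no isolated vertex, of order n and maximum degree Δ: ⌈(2n + γ_t(G))/(Δ+1)⌉ ≤ γ_{(2,2,1)}(G) ≤ min{3γ(G), 2γ_t(G)}. Moreover, if G has minimum degree δ ≥ 2, then γ_{(2,2,1)}(G) ≤ γ_{×2,t}(G). -/
open scoped Classical
open Finset SimpleGraph

/-!
Lower bound: the vertices of positive weight under an optimal `(2,2,1)`-function `f` form a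
total dominating set (every `w_i ≥ 1`), and for `w = (2,2,1)` double counting the
neighbourhood sums gives `2n + |supp f| ≤ ∑ᵥ (w_{f v} + f v) ≤ (Δ + 1) ∑ᵥ f v`.
Upper bounds: weight `2` on a total dominating set, weight `1` on a double total dominating
set, and weight `2` on a dominating set `S` together with weight `1` on one chosen neighbour of
each vertex of `S` are `(2,2,1)`-functions.
-/

theorem exists_apply_eq_sInf {α : Type*} {P : α → Prop} (c : α → ℕ) (h : ∃ x, P x) :
    ∃ x, P x ∧ c x = sInf {n | ∃ x, P x ∧ c x = n} := by
  obtain ⟨x, hx⟩ := h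
  exact Nat.sInf_mem (s := {n | ∃ x, P x ∧ c x = n}) ⟨c x, x, hx, rfl⟩

section

variable {V : Type*}

def IsDominating (G : SimpleGraph V) (S : Finset V) : Prop :=
  ∀ v, v ∈ S ∨ ∃ u ∈ S, G.Adj u v

def IsTotalDominating (G : SimpleGraph V) (S : Finset V) : Prop :=
  ∀ v, ∃ u ∈ S, G.Adj u v

def IsDoubleTotalDominating (G : SimpleGraph V) (S : Finset V) : Prop :=
  ∀ v, 2 ≤ (S.filter (fun u => G.Adj u v)).card

variable [Fintype V] {G : SimpleGraph V}

theorem isTotalDominating_univ (hG : ∀ v, ∃ u, G.Adj v u) : IsTotalDominating G univ :=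
  fun v => (hG v).imp fun u hu => ⟨mem_univ u, hu.symm⟩

theorem isDoubleTotalDominating_univ (hδ : 2 ≤ G.minDegree) : IsDoubleTotalDominating G univ := by
  intro v
  have hN : univ.filter (fun u => G.Adj u v) = G.neighborFinset v := by
    ext u; simp [adj_comm]
  rw [hN, card_neighborFinset_eq_degree]
  exact hδ.trans (G.minDegree_le_degree v)

variable (G) in
theorem exists_isDominating_card_eq_gamma : ∃ S, IsDominating G S ∧ S.card = gamma G :=
  exists_apply_eq_sInf card ⟨univ, fun v => .inl (mem_univ v)⟩

theorem exists_isTotalDominating_card_eq_gammaT (hG : ∀ v, ∃ u, G.Adj v u) :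
    ∃ S, IsTotalDominating G S ∧ S.card = gammaT G :=
  exists_apply_eq_sInf card ⟨univ, isTotalDominating_univ hG⟩

theorem exists_isDoubleTotalDominating_card_eq_gammaX2T (hδ : 2 ≤ G.minDegree) :
    ∃ S, IsDoubleTotalDominating G S ∧ S.card = gammaX2T G :=
  exists_apply_eq_sInf card ⟨univ, isDoubleTotalDominating_univ hδ⟩

section WDom

variable {l : ℕ} {w : Fin (l + 1) → ℕ} {f : V → Fin (l + 1)}

theorem gammaW_le_of_wDom (hf : WDom G w f) : gammaW G w ≤ ∑ v, (f v : ℕ) :=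
  Nat.sInf_le ⟨f, hf, rfl⟩

theorem exists_wDom_sum_eq_gammaW (h : ∃ f, WDom G w f) :
    ∃ f, WDom G w f ∧ ∑ v, (f v : ℕ) = gammaW G w :=
  exists_apply_eq_sInf _ h

theorem le_sum_adj_of_adj {g : V → ℕ} {v u : V} (h : G.Adj v u) :
    g u ≤ ∑ x, if G.Adj v x then g x else 0 :=
  calc g u = if G.Adj v u then g u else 0 := (if_pos h).symm
    _ ≤ _ := single_le_sum (f := fun x => if G.Adj v x then g x else 0)
        (fun _ _ => Nat.zero_le _) (mem_univ u)

theorem sum_sum_adj_le_maxDegree_mul (g : V → ℕ) :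
    ∑ v, ∑ u, (if G.Adj v u then g u else 0) ≤ G.maxDegree * ∑ u, g u := by
  rw [sum_comm, mul_sum]
  refine sum_le_sum fun u _ => ?_
  have hdeg : ∑ v, (if G.Adj v u then g u else 0) = G.degree u * g u := by
    rw [sum_ite, sum_const, sum_const_zero, add_zero, smul_eq_mul,
      ← card_neighborFinset_eq_degree]
    congr 2
    ext v; simp [adj_comm]
  exact hdeg ▸ Nat.mul_le_mul_right _ (G.degree_le_maxDegree u)

theorem sum_weight_le_maxDegree_mul_of_wDom (hf : WDom G w f) :
    ∑ v, w (f v) ≤ G.maxDegree * ∑ v, (f v : ℕ) :=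
  (sum_le_sum fun v _ => hf v).trans (sum_sum_adj_le_maxDegree_mul _)

theorem isTotalDominating_support_of_wDom (hw : ∀ i, 1 ≤ w i) (hf : WDom G w f) :
    IsTotalDominating G (univ.filter fun v => f v ≠ 0) := by
  intro v
  have hpos : (∑ u, if G.Adj v u then (f u : ℕ) else 0) ≠ 0 :=
    Nat.one_le_iff_ne_zero.mp ((hw (f v)).trans (hf v))
  obtain ⟨u, -, hu⟩ := exists_ne_zero_of_sum_ne_zero hpos
  by_cases hvu : G.Adj v u
  · rw [if_pos hvu] at hu
    exact ⟨u, mem_filter.mpr ⟨mem_univ u, fun h => hu (by rw [h]; rfl)⟩, hvu.symm⟩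
  · exact absurd (if_neg hvu) hu

end WDom

theorem one_le_w221 (i : Fin 3) : 1 ≤ (![2, 2, 1] : Fin 3 → ℕ) i := by
  revert i; decide

theorem w221_le_two (i : Fin 3) : (![2, 2, 1] : Fin 3 → ℕ) i ≤ 2 := by
  revert i; decide

theorem two_add_ite_ne_zero_le_w221_add (i : Fin 3) :
    2 + (if i ≠ 0 then 1 else 0) ≤ (![2, 2, 1] : Fin 3 → ℕ) i + i := by
  revert i; decide

theorem wDom221_of_forall_two_le {f : V → Fin 3}
    (hf : ∀ v, 2 ≤ ∑ u, if G.Adj v u then (f u : ℕ) else 0) : WDom G ![2, 2, 1] f :=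
  fun v => (w221_le_two _).trans (hf v)

theorem wDom221_two_of_isTotalDominating {S : Finset V} (hS : IsTotalDominating G S) :
    WDom G ![2, 2, 1] fun v => if v ∈ S then 2 else 0 := by
  refine wDom221_of_forall_two_le fun v => ?_
  obtain ⟨u, huS, huv⟩ := hS v
  refine le_trans ?_ (le_sum_adj_of_adj huv.symm)
  simp [huS]

theorem wDom221_one_of_isDoubleTotalDominating {S : Finset V}
    (hS : IsDoubleTotalDominating G S) :
    WDom G ![2, 2, 1] fun v => if v ∈ S then 1 else 0 := by
  refine wDom221_of_forall_two_le fun v => (hS v).trans_eq ?_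
  rw [card_filter, ← univ_inter S, ← sum_ite_mem]
  refine sum_congr rfl fun u _ => ?_
  by_cases huS : u ∈ S <;> by_cases hvu : G.Adj v u <;> simp [huS, hvu, adj_comm]

theorem wDom221_of_isDominating {S : Finset V} (hS : IsDominating G S) {t : V → V}
    (ht : ∀ v, G.Adj v (t v)) :
    WDom G ![2, 2, 1] fun v => if v ∈ S then 2 else if v ∈ S.image t then 1 else 0 := by
  intro v
  by_cases hvS : v ∈ S
  · have htv : t v ∈ S.image t := mem_image_of_mem t hvS
    refine le_trans ?_ (le_sum_adj_of_adj (ht v))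
    by_cases h : t v ∈ S <;> simp [hvS, htv, h]
  · obtain ⟨u, huS, huv⟩ := (hS v).resolve_left hvS
    refine (w221_le_two _).trans (le_trans ?_ (le_sum_adj_of_adj huv.symm))
    simp [huS]

theorem gammaW221_le_two_mul_card_of_isTotalDominating {S : Finset V}
    (hS : IsTotalDominating G S) : gammaW G ![2, 2, 1] ≤ 2 * S.card :=
  (gammaW_le_of_wDom (wDom221_two_of_isTotalDominating hS)).trans_eq <| by
    simp [apply_ite, sum_ite_mem, mul_comm]

theorem gammaW221_le_card_of_isDoubleTotalDominating {S : Finset V}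
    (hS : IsDoubleTotalDominating G S) : gammaW G ![2, 2, 1] ≤ S.card :=
  (gammaW_le_of_wDom (wDom221_one_of_isDoubleTotalDominating hS)).trans_eq <| by
    simp [apply_ite, sum_ite_mem]

theorem gammaW221_le_three_mul_card_of_isDominating (hG : ∀ v, ∃ u, G.Adj v u)
    {S : Finset V} (hS : IsDominating G S) : gammaW G ![2, 2, 1] ≤ 3 * S.card := by
  choose t ht using hG
  refine (gammaW_le_of_wDom (wDom221_of_isDominating hS ht)).trans ?_
  calc ∑ v, ((if v ∈ S then 2 else if v ∈ S.image t then 1 else 0 : Fin 3) : ℕ)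
      ≤ ∑ v, ((if v ∈ S then 2 else 0) + (if v ∈ S.image t then 1 else 0)) :=
        sum_le_sum fun v _ => by
          by_cases h₁ : v ∈ S <;> by_cases h₂ : v ∈ S.image t <;> simp [h₁, h₂]
    _ = 2 * S.card + (S.image t).card := by
        simp only [sum_add_distrib, sum_ite_mem, univ_inter, sum_const, smul_eq_mul, mul_one,
          mul_comm]
    _ ≤ 3 * S.card := by linarith [card_image_le (s := S) (f := t)]

theorem two_mul_card_add_gammaT_le (hG : ∀ v, ∃ u, G.Adj v u) :
    2 * Fintype.card V + gammaT G ≤ (G.maxDegree + 1) * gammaW G ![2, 2, 1] := by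
  obtain ⟨f, hf, hfw⟩ :=
    exists_wDom_sum_eq_gammaW ⟨_, wDom221_two_of_isTotalDominating (isTotalDominating_univ hG)⟩
  have hT : gammaT G ≤ (univ.filter fun v => f v ≠ 0).card :=
    Nat.sInf_le ⟨_, isTotalDominating_support_of_wDom one_le_w221 hf, rfl⟩
  have hpt := sum_le_sum fun v (_ : v ∈ univ) => two_add_ite_ne_zero_le_w221_add (f v)
  rw [sum_add_distrib, sum_add_distrib, sum_const, card_univ, smul_eq_mul, ← card_filter] at hpt
  have hΔ := sum_weight_le_maxDegree_mul_of_wDom hf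
  rw [← hfw]
  linarith

theorem ceil_le_gammaW221 (hG : ∀ v, ∃ u, G.Adj v u) :
    ⌈(2 * (Fintype.card V : ℚ) + (gammaT G : ℚ)) / ((G.maxDegree : ℚ) + 1)⌉ ≤
      (gammaW G ![2, 2, 1] : ℤ) := by
  rw [Int.ceil_le, div_le_iff₀ (by positivity)]
  exact_mod_cast two_mul_card_add_gammaT_le hG |>.trans_eq (mul_comm _ _)

end

theorem gammaW221_bounds {V : Type*} [Fintype V] (G : SimpleGraph V)
    (hG : ∀ v, ∃ u, G.Adj v u) :
    (⌈(2 * (Fintype.card V : ℚ) + (gammaT G : ℚ)) / ((G.maxDegree : ℚ) + 1)⌉ ≤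
        (gammaW G ![2,2,1] : ℤ) ∧
      gammaW G ![2,2,1] ≤ min (3 * gamma G) (2 * gammaT G)) ∧
    (2 ≤ G.minDegree → gammaW G ![2,2,1] ≤ gammaX2T G) := by
  obtain ⟨D, hD, hDcard⟩ := exists_isDominating_card_eq_gamma G
  obtain ⟨T, hT, hTcard⟩ := exists_isTotalDominating_card_eq_gammaT hG
  refine ⟨⟨ceil_le_gammaW221 hG, le_min ?_ ?_⟩, fun hδ => ?_⟩
  · exact hDcard ▸ gammaW221_le_three_mul_card_of_isDominating hG hD
  · exact hTcard ▸ gammaW221_le_two_mul_card_of_isTotalDominating hT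
  · obtain ⟨S, hS, hScard⟩ := exists_isDoubleTotalDominating_card_eq_gammaX2T hδ
    exact hScard ▸ gammaW221_le_card_of_isDoubleTotalDominating hS
end
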